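/- For $p > 2$ and $u, h \in L^p(\mathbb{R}^n)$, the function $t \mapsto |u+th|^{p-2}(u+th)$ satisfies the Fréchet differentiability estimate: $\||u+h|^{p-2}(u+h) - |u|^{p-2}u - (p-1)|u|^{p-2}h\|_{L^{p/(p-1)}} = o(\|h\|_{L^p})$ as $\|h\|_{L^p} \to 0$. -/

import Mathlib

/-!
Write `Φ s = |s| ^ (p - 2) * s`, so that `Φ' s = (p - 1) * |s| ^ (p - 2)`. By the mean value
theorem the remainder `Φ (a + b) - Φ a - Φ' a * b` equals
`(p - 1) * (|c| ^ (p - 2) - |a| ^ (p - 2)) * b` for some `c` with `|c - a| ≤ |b|`.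
If `p ≤ 3`, then `s ↦ |s| ^ (p - 2)` is `(p - 2)`-Hölder, so the remainder is at most
`(p - 1) * |b| ^ (p - 1)`, whose `L^{p/(p-1)}` norm is `(p - 1) * ‖h‖_p ^ (p - 1)`.
If `p > 3`, it is locally Lipschitz, so the remainder is at most
`(p - 1) * (p - 2) * (|a| + |b|) ^ (p - 3) * b ^ 2`, and Hölder's inequality with exponents
`p / (p - 3)` and `p / 2` bounds its norm by a multiple of `(‖u‖_p + ‖h‖_p) ^ (p - 3) * ‖h‖_p ^ 2`.
In both cases the norm of the remainder is at most `F ‖h‖_p * ‖h‖_p` with `F t → 0` as `t → 0`.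
-/

open Set Filter Topology MeasureTheory
open scoped ENNReal

theorem hasDerivAt_abs_rpow_mul_self {q : ℝ} (hq : 0 < q) (s : ℝ) :
    HasDerivAt (fun s : ℝ => |s| ^ q * s) ((q + 1) * |s| ^ q) s := by
  rcases eq_or_ne s 0 with rfl | hs
  · -- the difference quotient at `0` is `|t| ^ q`, which tends to `0`
    rw [hasDerivAt_iff_tendsto_slope_zero]
    have hcont : Continuous fun t : ℝ => |t| ^ q :=
      continuous_abs.rpow_const fun _ => Or.inr hq.le
    have hlim := (hcont.tendsto 0).mono_left (nhdsWithin_le_nhds (s := {0}ᶜ))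
    simp only [abs_zero, Real.zero_rpow hq.ne', mul_zero] at hlim ⊢
    refine hlim.congr' (eventually_nhdsWithin_of_forall fun t (ht : t ≠ 0) => ?_)
    simp only [zero_add, sub_zero, smul_eq_mul]
    field_simp
  · have habs : |s| ≠ 0 := abs_ne_zero.2 hs
    have hsign : (SignType.sign s : ℝ) * s = |s| := by
      rcases hs.lt_or_gt with h | h <;> simp [h, abs_of_neg, abs_of_pos]
    refine (((hasDerivAt_abs hs).rpow_const (Or.inl habs)).mul (hasDerivAt_id' s)).congr_deriv ?_
    rw [Real.rpow_sub_one habs]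
    calc _ = q * |s| ^ q * ((SignType.sign s : ℝ) * s) / |s| + |s| ^ q := by ring
      _ = (q + 1) * |s| ^ q := by rw [hsign]; field_simp

noncomputable def powRemainder (p a b : ℝ) : ℝ :=
  |a + b| ^ (p - 2) * (a + b) - |a| ^ (p - 2) * a - (p - 1) * |a| ^ (p - 2) * b

theorem exists_powRemainder_eq {p : ℝ} (hp : 2 < p) (a b : ℝ) :
    ∃ c, |c - a| ≤ |b| ∧
      powRemainder p a b = (p - 1) * (|c| ^ (p - 2) - |a| ^ (p - 2)) * b := by
  have hderiv (t : ℝ) : HasDerivAt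
      (fun t => |a + t * b| ^ (p - 2) * (a + t * b) - t * ((p - 1) * |a| ^ (p - 2) * b))
      ((p - 1) * (|a + t * b| ^ (p - 2) - |a| ^ (p - 2)) * b) t := by
    have hline : HasDerivAt (fun t => a + t * b) b t := by
      simpa using ((hasDerivAt_id t).mul_const b).const_add a
    exact (((hasDerivAt_abs_rpow_mul_self (by linarith : 0 < p - 2) _).comp t hline).sub
      (hasDerivAt_mul_const ((p - 1) * |a| ^ (p - 2) * b))).congr_deriv (by ring)
  obtain ⟨t, ht, hslope⟩ := exists_hasDerivAt_eq_slope _ _ zero_lt_one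
    (fun t _ => (hderiv t).continuousAt.continuousWithinAt) (fun t _ => hderiv t)
  refine ⟨a + t * b, ?_, ?_⟩
  · rw [add_sub_cancel_left, abs_mul, abs_of_pos ht.1]
    exact mul_le_of_le_one_left (abs_nonneg b) ht.2.le
  rw [hslope, powRemainder]
  simp only [one_mul, zero_mul, add_zero, sub_zero, div_one]
  ring

theorem abs_abs_rpow_sub_abs_rpow_le {q : ℝ} (hq₀ : 0 ≤ q) (hq₁ : q ≤ 1) (x y : ℝ) :
    |(|x| ^ q - |y| ^ q)| ≤ |x - y| ^ q := by
  have key (x y : ℝ) : |x| ^ q - |y| ^ q ≤ |x - y| ^ q := by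
    suffices |x| ^ q ≤ |y| ^ q + |x - y| ^ q by linarith
    calc |x| ^ q ≤ (|y| + |x - y|) ^ q := by
          gcongr
          simpa using abs_add_le y (x - y)
      _ ≤ |y| ^ q + |x - y| ^ q :=
          Real.rpow_add_le_add_rpow (abs_nonneg _) (abs_nonneg _) hq₀ hq₁
  rw [abs_sub_le_iff]
  nth_rewrite 2 [abs_sub_comm]
  exact ⟨key x y, key y x⟩

theorem abs_abs_rpow_sub_abs_rpow_le_mul {q : ℝ} (hq : 1 < q) (x y : ℝ) :
    |(|x| ^ q - |y| ^ q)| ≤ q * max |x| |y| ^ (q - 1) * |x - y| := by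
  set R := max |x| |y|
  have hmem {z : ℝ} (hz : |z| ≤ R) : z ∈ Icc (-R) R := abs_le.1 hz
  have := Convex.norm_image_sub_le_of_norm_hasDerivWithin_le (C := q * R ^ (q - 1))
    (fun z _ => (hasDerivAt_abs_rpow z hq).hasDerivWithinAt)
    (fun z hz => ?_) (convex_Icc (-R) R) (hmem (le_max_right _ _)) (hmem (le_max_left _ _))
  · simpa only [Real.norm_eq_abs] using this
  · have hzR : |z| ≤ R := abs_le.2 hz
    rw [Real.norm_eq_abs, abs_mul, abs_mul, abs_of_pos (by linarith : 0 < q),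
      abs_of_nonneg (by positivity), mul_assoc,
      ← Real.rpow_add_one' (abs_nonneg z) (by linarith),
      show q - 2 + 1 = q - 1 by ring]
    gcongr

theorem abs_powRemainder_le_of_le_three {p : ℝ} (hp : 2 < p) (hp3 : p ≤ 3) (a b : ℝ) :
    |powRemainder p a b| ≤ (p - 1) * |b| ^ (p - 1) := by
  obtain ⟨c, hc, hR⟩ := exists_powRemainder_eq hp a b
  have hp1 : 0 < p - 1 := by linarith
  calc |powRemainder p a b|
      = (p - 1) * |(|c| ^ (p - 2) - |a| ^ (p - 2))| * |b| := by
        rw [hR, abs_mul, abs_mul, abs_of_pos hp1]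
    _ ≤ (p - 1) * |b| ^ (p - 2) * |b| := by
        gcongr
        exact (abs_abs_rpow_sub_abs_rpow_le (q := p - 2) (by linarith) (by linarith) _ _).trans
          (by gcongr)
    _ = (p - 1) * |b| ^ (p - 1) := by
        rw [mul_assoc, ← Real.rpow_add_one' (abs_nonneg b) (by linarith)]
        ring_nf

theorem abs_powRemainder_le_of_three_lt {p : ℝ} (hp : 3 < p) (a b : ℝ) :
    |powRemainder p a b| ≤ (p - 1) * (p - 2) * (|a| + |b|) ^ (p - 3) * |b| ^ 2 := by
  obtain ⟨c, hc, hR⟩ := exists_powRemainder_eq (by linarith) a b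
  have hmax : max |c| |a| ≤ |a| + |b| := by
    refine max_le ?_ (by linarith [abs_nonneg b])
    calc |c| ≤ |a| + |c - a| := by simpa using abs_add_le a (c - a)
      _ ≤ |a| + |b| := by gcongr
  have hp1 : 0 < p - 1 := by linarith
  have hp2 : 0 ≤ p - 2 := by linarith
  have hfactor : 0 ≤ (p - 2) * (|a| + |b|) ^ (p - 3) := mul_nonneg hp2 (by positivity)
  calc |powRemainder p a b|
      = (p - 1) * |(|c| ^ (p - 2) - |a| ^ (p - 2))| * |b| := by
        rw [hR, abs_mul, abs_mul, abs_of_pos hp1]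
    _ ≤ (p - 1) * ((p - 2) * (|a| + |b|) ^ (p - 3) * |b|) * |b| := by
        gcongr
        refine (abs_abs_rpow_sub_abs_rpow_le_mul (q := p - 2) (by linarith) _ _).trans ?_
        rw [show p - 2 - 1 = p - 3 by ring]
        gcongr
    _ = (p - 1) * (p - 2) * (|a| + |b|) ^ (p - 3) * |b| ^ 2 := by ring

theorem ENNReal.exists_pos_forall_le_ofReal_of_tendsto_zero {F : ℝ≥0∞ → ℝ≥0∞}
    (hF : Tendsto F (𝓝 0) (𝓝 0)) {ε : ℝ} (hε : 0 < ε) :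
    ∃ δ : ℝ, 0 < δ ∧ ∀ t ≤ ENNReal.ofReal δ, F t ≤ ENNReal.ofReal ε := by
  obtain ⟨η, hη, hFη⟩ := (ENNReal.nhds_zero_basis_Iic.tendsto_iff ENNReal.nhds_zero_basis_Iic).1 hF
    _ (ENNReal.ofReal_pos.2 hε)
  have hη₁ : min η 1 ≠ ⊤ := (min_le_right η 1).trans_lt ENNReal.one_lt_top |>.ne
  refine ⟨(min η 1).toReal, ENNReal.toReal_pos (lt_min hη one_pos).ne' hη₁, fun t ht => ?_⟩
  rw [ENNReal.ofReal_toReal hη₁] at ht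
  exact hFη t (ht.trans (min_le_left η 1))

section Lp

variable {α : Type*} {m : MeasurableSpace α} {μ : Measure α}

theorem eLpNorm_abs_rpow (f : α → ℝ) {p r : ℝ} (hp : 0 ≤ p) (hr : 0 < r) :
    eLpNorm (fun x => |f x| ^ r) (ENNReal.ofReal (p / r)) μ
      = eLpNorm f (ENNReal.ofReal p) μ ^ r := by
  have := eLpNorm_norm_rpow (p := ENNReal.ofReal (p / r)) (μ := μ) f hr
  rwa [← ENNReal.ofReal_mul (by positivity), div_mul_cancel₀ _ hr.ne'] at this

theorem eLpNorm_abs_rpow_mul_abs_rpow_le {f g : α → ℝ} (hf : AEStronglyMeasurable f μ)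
    (hg : AEStronglyMeasurable g μ) {p r s : ℝ} (hp : 0 < p) (hr : 0 < r) (hs : 0 < s) :
    eLpNorm (fun x => |f x| ^ r * |g x| ^ s) (ENNReal.ofReal (p / (r + s))) μ
      ≤ eLpNorm f (ENNReal.ofReal p) μ ^ r * eLpNorm g (ENNReal.ofReal p) μ ^ s := by
  have : ENNReal.HolderTriple (ENNReal.ofReal (p / r)) (ENNReal.ofReal (p / s))
      (ENNReal.ofReal (p / (r + s))) := by
    constructor
    rw [← ENNReal.ofReal_inv_of_pos (by positivity), ← ENNReal.ofReal_inv_of_pos (by positivity),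
      ← ENNReal.ofReal_inv_of_pos (by positivity), ← ENNReal.ofReal_add (by positivity)
        (by positivity)]
    congr 1
    field_simp
  have hrpow {t : ℝ} (ht : 0 < t) {k : α → ℝ} (hk : AEStronglyMeasurable k μ) :
      AEStronglyMeasurable (fun x => |k x| ^ t) μ :=
    (continuous_abs.rpow_const fun _ => Or.inr ht.le).comp_aestronglyMeasurable hk
  have hHolder := eLpNorm_smul_le_mul_eLpNorm (hrpow hs hg) (hrpow hr hf)
    (p := ENNReal.ofReal (p / r)) (q := ENNReal.ofReal (p / s)) (r := ENNReal.ofReal (p / (r + s)))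
  rwa [eLpNorm_abs_rpow _ hp.le hr, eLpNorm_abs_rpow _ hp.le hs] at hHolder

theorem eLpNorm_powRemainder_le_of_le_three {p : ℝ} (hp : 2 < p) (hp3 : p ≤ 3) (u h : α → ℝ) :
    eLpNorm (fun x => powRemainder p (u x) (h x)) (ENNReal.ofReal (p / (p - 1))) μ
      ≤ ENNReal.ofReal (p - 1) * eLpNorm h (ENNReal.ofReal p) μ ^ (p - 1) := by
  calc _ ≤ eLpNorm ((p - 1) • fun x => |h x| ^ (p - 1)) (ENNReal.ofReal (p / (p - 1))) μ :=
        eLpNorm_mono_real fun x => abs_powRemainder_le_of_le_three hp hp3 _ _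
    _ = _ := by
        rw [eLpNorm_const_smul, eLpNorm_abs_rpow _ (by linarith) (by linarith),
          Real.enorm_eq_ofReal (by linarith)]

theorem eLpNorm_powRemainder_le_of_three_lt {p : ℝ} (hp : 3 < p) {u h : α → ℝ}
    (hu : AEStronglyMeasurable u μ) (hh : AEStronglyMeasurable h μ) :
    eLpNorm (fun x => powRemainder p (u x) (h x)) (ENNReal.ofReal (p / (p - 1))) μ
      ≤ ENNReal.ofReal ((p - 1) * (p - 2))
        * (eLpNorm u (ENNReal.ofReal p) μ + eLpNorm h (ENNReal.ofReal p) μ) ^ (p - 3)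
        * eLpNorm h (ENNReal.ofReal p) μ ^ 2 := by
  have hsum : eLpNorm (fun x => |u x| + |h x|) (ENNReal.ofReal p) μ
      ≤ eLpNorm u (ENNReal.ofReal p) μ + eLpNorm h (ENNReal.ofReal p) μ := by
    have := eLpNorm_add_le hu.norm hh.norm (ENNReal.one_le_ofReal.2 (by linarith))
    rwa [eLpNorm_norm, eLpNorm_norm] at this
  have hsum_meas : AEStronglyMeasurable (fun x => |u x| + |h x|) μ := hu.norm.add hh.norm
  have hHolder := eLpNorm_abs_rpow_mul_abs_rpow_le hsum_meas hh
    (by linarith : 0 < p) (by linarith : 0 < p - 3) two_pos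
  rw [show p - 3 + 2 = p - 1 by ring, ENNReal.rpow_two] at hHolder
  calc _ ≤ eLpNorm (((p - 1) * (p - 2)) • fun x => |(|u x| + |h x|)| ^ (p - 3) * |h x| ^ (2 : ℝ))
          (ENNReal.ofReal (p / (p - 1))) μ := by
        refine eLpNorm_mono_real fun x => (abs_powRemainder_le_of_three_lt hp _ _).trans_eq ?_
        simp only [Pi.smul_apply, smul_eq_mul, Real.rpow_two]
        rw [abs_of_nonneg (by positivity : 0 ≤ |u x| + |h x|)]
        ring
    _ ≤ _ := by
        rw [eLpNorm_const_smul, Real.enorm_eq_ofReal (by nlinarith), mul_assoc]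
        gcongr
        exact hHolder.trans (by gcongr)

theorem exists_tendsto_zero_eLpNorm_powRemainder_le {p : ℝ} (hp : 2 < p) {u : α → ℝ}
    (hu : MemLp u (ENNReal.ofReal p) μ) :
    ∃ F : ℝ≥0∞ → ℝ≥0∞, Tendsto F (𝓝 0) (𝓝 0) ∧ ∀ h : α → ℝ, AEStronglyMeasurable h μ →
      eLpNorm (fun x => powRemainder p (u x) (h x)) (ENNReal.ofReal (p / (p - 1))) μ
        ≤ F (eLpNorm h (ENNReal.ofReal p) μ) * eLpNorm h (ENNReal.ofReal p) μ := by
  rcases le_or_gt p 3 with hp3 | hp3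
  · refine ⟨fun t => ENNReal.ofReal (p - 1) * t ^ (p - 2), ?_, fun h _ => ?_⟩
    · have := ENNReal.Tendsto.const_mul (a := ENNReal.ofReal (p - 1))
        ((ENNReal.continuous_rpow_const (y := p - 2)).tendsto 0) (Or.inr ENNReal.ofReal_ne_top)
      rwa [ENNReal.zero_rpow_of_pos (by linarith), mul_zero] at this
    · refine (eLpNorm_powRemainder_le_of_le_three hp hp3 u h).trans_eq ?_
      rw [mul_assoc, show p - 1 = p - 2 + 1 by ring,
        ENNReal.rpow_add_of_nonneg _ _ (by linarith) zero_le_one, ENNReal.rpow_one]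
  · set M := eLpNorm u (ENNReal.ofReal p) μ
    have hM : (M + 0) ^ (p - 3) ≠ ⊤ :=
      ENNReal.rpow_ne_top_of_nonneg (by linarith) (by simpa using hu.eLpNorm_lt_top.ne)
    refine ⟨fun t => ENNReal.ofReal ((p - 1) * (p - 2)) * ((M + t) ^ (p - 3) * t), ?_,
      fun h hh => ?_⟩
    · have hpow :=
        ((ENNReal.continuous_rpow_const (y := p - 3)).comp (continuous_const_add M)).tendsto 0
      have := ENNReal.Tendsto.const_mul (a := ENNReal.ofReal ((p - 1) * (p - 2)))
        (ENNReal.Tendsto.mul hpow (Or.inr ENNReal.zero_ne_top) tendsto_id (Or.inr hM))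
        (Or.inr ENNReal.ofReal_ne_top)
      rwa [mul_zero, mul_zero] at this
    · refine (eLpNorm_powRemainder_le_of_three_lt hp3 hu.1 hh).trans_eq ?_
      ring

end Lp

theorem stmt_18_general (n : ℕ) (p : ℝ) (hp : 2 < p)
    (u : EuclideanSpace ℝ (Fin n) → ℝ) (hu : MemLp u (ENNReal.ofReal p) volume) :
    ∀ ε : ℝ, 0 < ε → ∃ δ : ℝ, 0 < δ ∧
      ∀ h : EuclideanSpace ℝ (Fin n) → ℝ, MemLp h (ENNReal.ofReal p) volume →
        eLpNorm h (ENNReal.ofReal p) volume ≤ ENNReal.ofReal δ →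
        eLpNorm (fun x => |u x + h x| ^ (p - 2) * (u x + h x)
            - |u x| ^ (p - 2) * u x - (p - 1) * |u x| ^ (p - 2) * h x)
          (ENNReal.ofReal (p / (p - 1))) volume
          ≤ ENNReal.ofReal ε * eLpNorm h (ENNReal.ofReal p) volume := by
  intro ε hε
  obtain ⟨F, hF, hbound⟩ := exists_tendsto_zero_eLpNorm_powRemainder_le hp hu
  obtain ⟨δ, hδ, hFδ⟩ := ENNReal.exists_pos_forall_le_ofReal_of_tendsto_zero hF hε
  exact ⟨δ, hδ, fun h hh hhδ => (hbound h hh.1).trans (mul_le_mul_left (hFδ _ hhδ) _)⟩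

/-- Fréchet differentiability of the Nemytskii operator `u ↦ |u|^{p-2}u` from `L^p` to
`L^{p/(p-1)}`: `‖|u+h|^{p-2}(u+h) - |u|^{p-2}u - (p-1)|u|^{p-2}h‖_{L^{p/(p-1)}} = o(‖h‖_{L^p})`
as `‖h‖_{L^p} → 0`. -/
theorem stmt_18 (n : ℕ) (hn : 1 ≤ n) (p : ℝ) (hp : 2 < p)
    (u : EuclideanSpace ℝ (Fin n) → ℝ) (hu : MemLp u (ENNReal.ofReal p) volume) :
    ∀ ε : ℝ, 0 < ε → ∃ δ : ℝ, 0 < δ ∧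
      ∀ h : EuclideanSpace ℝ (Fin n) → ℝ, MemLp h (ENNReal.ofReal p) volume →
        eLpNorm h (ENNReal.ofReal p) volume ≤ ENNReal.ofReal δ →
        eLpNorm (fun x => |u x + h x| ^ (p - 2) * (u x + h x)
            - |u x| ^ (p - 2) * u x - (p - 1) * |u x| ^ (p - 2) * h x)
          (ENNReal.ofReal (p / (p - 1))) volume
          ≤ ENNReal.ofReal ε * eLpNorm h (ENNReal.ofReal p) volume :=
  stmt_18_general n p hp u hu
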